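/- Let n be a positive integer, B a symmetric positive-definite n×n real matrix, g ∈ ℝⁿ with g ≠ 0, δ > 0, and σ ≥ 0. Let p = -(B + σI)⁻¹g, and suppose B + σI = RᵀR is a Cholesky factorization (R upper triangular and invertible) and q solves Rᵀq = p. Then qᵀq = pᵀ(B + σI)⁻¹p, and the Moré–Sorensen update σ + (‖p‖₂²/‖q‖₂²)·(‖p‖₂ - δ)/δ equals the Newton iterate σ - φ(σ)/φ'(σ) for the secular function φ(σ) = 1/‖p(σ)‖₂ - 1/δ, where p(σ) = -(B + σI)⁻¹g. -/

import Mathlib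

/-! Writing `A = B + σI = RᵀR` and `p = Rᵀq`, one gets
`pᵀA⁻¹p = qᵀR R⁻¹R⁻ᵀ Rᵀq = qᵀq = ‖q‖²`. With `φ'(σ) = ‖q‖²/‖p‖³` the Newton correction is
`φ/φ' = (δ - ‖p‖)‖p‖²/(δ‖q‖²)`, which is the Moré–Sorensen correction; the divisions are
legitimate because `A` is invertible and `g ≠ 0` force `p ≠ 0`, hence `q ≠ 0`. -/

open Matrix

/-- `p(σ) = -(B + σI)⁻¹ g`, the solution of the shifted system `(B + σI)p = -g`. -/
noncomputable def psig {n : ℕ} (B : Matrix (Fin n) (Fin n) ℝ)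
    (g : EuclideanSpace ℝ (Fin n)) (σ : ℝ) : EuclideanSpace ℝ (Fin n) :=
  WithLp.toLp 2 (-((B + σ • 1)⁻¹.mulVec g))

theorem dotProduct_inv_mulVec_transpose_mul_self {ι α : Type*} [Fintype ι] [DecidableEq ι]
    [CommRing α] {R : Matrix ι ι α} (hR : IsUnit R.det) (q : ι → α) :
    (Rᵀ *ᵥ q) ⬝ᵥ (Rᵀ * R)⁻¹ *ᵥ (Rᵀ *ᵥ q) = q ⬝ᵥ q := by
  have hRT : IsUnit Rᵀ.det := by rwa [det_transpose]
  rw [Matrix.mul_inv_rev, ← mulVec_mulVec, mulVec_mulVec _ Rᵀ⁻¹, nonsing_inv_mul _ hRT, one_mulVec,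
    mulVec_transpose, ← dotProduct_mulVec, mulVec_mulVec, mul_nonsing_inv _ hR, one_mulVec]

theorem EuclideanSpace.dotProduct_self_eq_norm_sq {ι : Type*} [Fintype ι]
    (x : EuclideanSpace ℝ ι) : x ⬝ᵥ x = ‖x‖ ^ 2 := by
  rw [← real_inner_self_eq_norm_sq, EuclideanSpace.inner_eq_star_dotProduct]
  simp

theorem psig_ne_zero {n : ℕ} {B : Matrix (Fin n) (Fin n) ℝ} {g : EuclideanSpace ℝ (Fin n)}
    {σ : ℝ} (hA : IsUnit (B + σ • 1).det) (hg : g ≠ 0) : psig B g σ ≠ 0 := by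
  have hinj : Function.Injective (B + σ • 1)⁻¹.mulVec :=
    mulVec_injective_iff_isUnit.mpr ((isUnit_iff_isUnit_det _).mpr (isUnit_nonsing_inv_det _ hA))
  intro hp
  apply hg
  have : (B + σ • 1)⁻¹ *ᵥ g = (B + σ • 1)⁻¹ *ᵥ 0 := by
    simpa [psig] using congrArg WithLp.ofLp hp
  exact WithLp.ofLp_injective 2 (hinj this)

theorem moreSorensen_update_eq_newton_step {P Q δ : ℝ} (hP : P ≠ 0) (hQ : Q ≠ 0) (hδ : δ ≠ 0) (σ : ℝ) :
    σ + (P ^ 2 / Q ^ 2) * ((P - δ) / δ) = σ - (1 / P - 1 / δ) / (Q ^ 2 / P ^ 3) := by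
  field_simp
  ring

theorem mss_stmt9_general (n : ℕ)
    (B : Matrix (Fin n) (Fin n) ℝ)
    (g : EuclideanSpace ℝ (Fin n)) (hg : g ≠ 0)
    (δ : ℝ) (hδ : 0 < δ) (σ : ℝ)
    (R : Matrix (Fin n) (Fin n) ℝ)
    (hRinv : IsUnit R.det)
    (hchol : B + σ • 1 = Rᵀ * R)
    (q : EuclideanSpace ℝ (Fin n))
    (hq : Rᵀ.mulVec q = psig B g σ) :
    q ⬝ᵥ q = psig B g σ ⬝ᵥ (B + σ • 1)⁻¹.mulVec (psig B g σ) ∧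
    σ + (‖psig B g σ‖ ^ 2 / ‖q‖ ^ 2) * ((‖psig B g σ‖ - δ) / δ) =
      σ - (1 / ‖psig B g σ‖ - 1 / δ) /
        ((psig B g σ ⬝ᵥ (B + σ • 1)⁻¹.mulVec (psig B g σ)) / ‖psig B g σ‖ ^ 3) := by
  have hA : IsUnit (B + σ • 1).det := by
    rw [hchol, det_mul, det_transpose]
    exact hRinv.mul hRinv
  have hp : psig B g σ ≠ 0 := psig_ne_zero hA hg
  have hq0 : q ≠ 0 := by
    rintro rfl
    exact hp (WithLp.ofLp_injective 2 (by simpa using hq.symm))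
  have key : q ⬝ᵥ q = psig B g σ ⬝ᵥ (B + σ • 1)⁻¹.mulVec (psig B g σ) := by
    rw [← hq, hchol, dotProduct_inv_mulVec_transpose_mul_self hRinv]
  refine ⟨key, ?_⟩
  rw [← key, EuclideanSpace.dotProduct_self_eq_norm_sq]
  exact moreSorensen_update_eq_newton_step (norm_ne_zero_iff.mpr hp) (norm_ne_zero_iff.mpr hq0) hδ.ne' σ

/-- Given the Cholesky factorization `B + σI = RᵀR` (`R` upper triangular and
invertible), and `q` solving `Rᵀq = p` with `p = -(B + σI)⁻¹g`, one has
`qᵀq = pᵀ(B + σI)⁻¹p`, and the Moré–Sorensen update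
`σ + (‖p‖²/‖q‖²)·(‖p‖ - δ)/δ` equals the Newton iterate `σ - φ(σ)/φ'(σ)` for
the secular function `φ(σ) = 1/‖p(σ)‖₂ - 1/δ`, whose derivative is
`φ'(σ) = p(σ)ᵀ(B + σI)⁻¹p(σ)/‖p(σ)‖₂³`. -/
theorem mss_stmt9 (n : ℕ) (hn : 0 < n)
    (B : Matrix (Fin n) (Fin n) ℝ) (hB : B.PosDef)
    (g : EuclideanSpace ℝ (Fin n)) (hg : g ≠ 0)
    (δ : ℝ) (hδ : 0 < δ) (σ : ℝ) (hσ : 0 ≤ σ)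
    (R : Matrix (Fin n) (Fin n) ℝ)
    (hupper : R.BlockTriangular (id : Fin n → Fin n))
    (hRinv : IsUnit R.det)
    (hchol : B + σ • 1 = Rᵀ * R)
    (q : EuclideanSpace ℝ (Fin n))
    (hq : Rᵀ.mulVec q = psig B g σ) :
    q ⬝ᵥ q = psig B g σ ⬝ᵥ (B + σ • 1)⁻¹.mulVec (psig B g σ) ∧
    σ + (‖psig B g σ‖ ^ 2 / ‖q‖ ^ 2) * ((‖psig B g σ‖ - δ) / δ) =
      σ - (1 / ‖psig B g σ‖ - 1 / δ) /
        ((psig B g σ ⬝ᵥ (B + σ • 1)⁻¹.mulVec (psig B g σ)) / ‖psig B g σ‖ ^ 3) :=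
  mss_stmt9_general n B g hg δ hδ σ R hRinv hchol q hq
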